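/- arXiv:0812.1938 — 2 statements merged into one kernel-verified Lean document; each statement's English description precedes it below -/
import Mathlib

section
/- (Gessel–Viennot–Lindström lemma for DAGs.) Let $G$ be a directed acyclic graph on $[m]$ with edge indeterminates $\lambda_{ij}$, and let $\Lambda = I - L$ as above. Let $R = \{r_1 < \cdots < r_\ell\}$ and $S = \{s_1 < \cdots < s_\ell\}$ be subsets of $[m]$. Then $\det(\Lambda^{-1})_{R,S} = \sum_{\mathbf{P} \in N(R,S)} (-1)^{\mathbf{P}} \lambda^{\mathbf{P}}$, where $N(R,S)$ is the set of systems of $\ell$ pairwise vertex-disjoint directed paths connecting $R$ to $S$, $(-1)^{\mathbf{P}}$ is the sign of the induced permutation from $R$ to $S$, and $\lambda^{\mathbf{P}}$ is the product of edge variables over all paths in the system. -/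
open Matrix MvPolynomial

/-- A directed path, as the list of its vertices, from `i` to `j`. -/
def IsPath {V : Type*} (E : V → V → Prop) (p : List V) (i j : V) : Prop :=
  p.head? = some i ∧ p.getLast? = some j ∧ p.Chain' E

/-- The path monomial: product of edge weights along a path. -/
noncomputable def pathMonomial {V : Type*} {R : Type*} [CommRing R]
    (w : V × V → R) (p : List V) : R :=
  ((p.zip p.tail).map w).prod

/-- The minor of an `m × m` matrix with rows indexed by `A` and columns by `B`
(both listed in increasing order); junk value `0` if `#A ≠ #B`. -/
noncomputable def subdet {m : ℕ} {R : Type*} [CommRing R]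
    (M : Matrix (Fin m) (Fin m) R) (A B : Finset (Fin m)) : R :=
  if h : A.card = B.card then
    (M.submatrix (fun i : Fin A.card => ((A.orderIsoOfFin rfl) i).1)
      (fun i : Fin A.card => ((B.orderIsoOfFin h.symm) i).1)).det
  else 0

/-!
Every edge goes up in the vertex order, so paths are increasing lists and there are finitely
many of them. The path matrix `M` (paths from `i` to `j`, weighted by their monomials) satisfies
`M = 1 + L * M` by splitting off the first edge, hence `M = (1 - L)⁻¹`. The Leibniz formula
expands a minor of `M` into a signed sum over all systems of paths from `R` to `S`. Systems with
a shared vertex cancel in pairs: let `v` be the smallest shared vertex and exchange the tails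
after `v` of the paths through `v` with the smallest and the largest index. This keeps the
weight and flips the sign; as the new paths only gain vertices `≥ v`, the same vertex and the
same two indices are chosen again, so the exchange is an involution.
-/

open Finset

namespace IsPath

variable {V : Type*} {E : V → V → Prop} {p q : List V} {i j x : V}

lemma isChain (hp : IsPath E p i j) : p.IsChain E := hp.2.2

lemma exists_eq_cons (hp : IsPath E p i j) : ∃ q, p = i :: q :=
  List.head?_eq_some_iff.1 hp.1

lemma cons (hq : IsPath E q x j) (hix : E i x) : IsPath E (i :: q) i j := by
  obtain ⟨q, rfl⟩ := hq.exists_eq_cons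
  exact ⟨rfl, by simpa [List.getLast?_cons_cons] using hq.2.1,
    List.isChain_cons_cons.2 ⟨hix, hq.isChain⟩⟩

lemma exists_eq_cons_of_ne (hp : IsPath E p i j) (hij : i ≠ j) :
    ∃ x q, p = i :: q ∧ q.head? = some x ∧ E i x ∧ IsPath E q x j := by
  obtain ⟨_ | ⟨x, q⟩, rfl⟩ := hp.exists_eq_cons
  · exact absurd (by simpa using hp.2.1) hij
  · refine ⟨x, x :: q, rfl, rfl, (List.isChain_cons_cons.1 hp.isChain).1, rfl, ?_,
      (List.isChain_cons_cons.1 hp.isChain).2⟩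
    simpa [List.getLast?_cons_cons] using hp.2.1

section Ordered

variable [Preorder V] (hE : ∀ a b, E a b → a < b)
include hE

lemma pairwise_lt (hp : IsPath E p i j) : p.Pairwise (· < ·) :=
  List.isChain_iff_pairwise.1 (hp.isChain.imp hE)

lemma le (hp : IsPath E p i j) : i ≤ j := by
  obtain ⟨q, rfl⟩ := hp.exists_eq_cons
  rcases List.mem_cons.1 (List.mem_of_mem_getLast? hp.2.1) with rfl | hj
  · exact le_rfl
  · exact (List.rel_of_pairwise_cons (hp.pairwise_lt hE) hj).le

end Ordered

end IsPath

lemma isPath_self_iff {V : Type*} [Preorder V] {E : V → V → Prop}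
    (hE : ∀ a b, E a b → a < b) {p : List V} {i : V} : IsPath E p i i ↔ p = [i] := by
  refine ⟨fun hp => ?_, fun hp => hp ▸ ⟨rfl, rfl, List.isChain_singleton i⟩⟩
  obtain ⟨_ | ⟨x, q⟩, rfl⟩ := hp.exists_eq_cons
  · rfl
  · have hi : i ∈ x :: q :=
      List.mem_of_mem_getLast? (by simpa [List.getLast?_cons_cons] using hp.2.1)
    exact absurd (List.rel_of_pairwise_cons (hp.pairwise_lt hE) hi) (lt_irrefl i)

section Splice

variable {V : Type*} [DecidableEq V]

def splice (v : V) (p q : List V) : List V :=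
  p.takeWhile (· ≠ v) ++ q.dropWhile (· ≠ v)

@[simp] lemma splice_self (v : V) (p : List V) : splice v p p = p :=
  List.takeWhile_append_dropWhile

variable {v : V} {a b c d : List V}

lemma takeWhile_ne_append_cons (ha : v ∉ a) : (a ++ v :: b).takeWhile (· ≠ v) = a := by
  rw [List.takeWhile_append_of_pos fun x hx => decide_eq_true (ne_of_mem_of_not_mem hx ha)]
  simp

lemma dropWhile_ne_append_cons (ha : v ∉ a) : (a ++ v :: b).dropWhile (· ≠ v) = v :: b := by
  rw [List.dropWhile_append_of_pos fun x hx => decide_eq_true (ne_of_mem_of_not_mem hx ha)]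
  simp

lemma splice_append_cons (ha : v ∉ a) (hc : v ∉ c) :
    splice v (a ++ v :: b) (c ++ v :: d) = a ++ v :: d := by
  rw [splice, takeWhile_ne_append_cons ha, dropWhile_ne_append_cons hc]

variable {p q : List V}

lemma splice_splice (hp : v ∈ p) (hq : v ∈ q) : splice v (splice v p q) (splice v q p) = p := by
  obtain ⟨a, b, rfl, ha⟩ := List.eq_append_cons_of_mem hp
  obtain ⟨c, d, rfl, hc⟩ := List.eq_append_cons_of_mem hq
  rw [splice_append_cons ha hc, splice_append_cons hc ha, splice_append_cons ha hc]

lemma mem_splice_self (hq : v ∈ q) : v ∈ splice v p q := by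
  obtain ⟨c, d, rfl, hc⟩ := List.eq_append_cons_of_mem hq
  rw [splice, dropWhile_ne_append_cons hc]
  exact List.mem_append_right _ List.mem_cons_self

lemma IsPath.splice {E : V → V → Prop} {i j i' j' : V} (hp : IsPath E p i j)
    (hq : IsPath E q i' j') (hvp : v ∈ p) (hvq : v ∈ q) : IsPath E (splice v p q) i j' := by
  obtain ⟨a, b, rfl, ha⟩ := List.eq_append_cons_of_mem hvp
  obtain ⟨c, d, rfl, hc⟩ := List.eq_append_cons_of_mem hvq
  rw [splice_append_cons ha hc]
  refine ⟨by simpa [List.head?_append] using hp.1, by simpa [List.getLast?_append] using hq.2.1, ?_⟩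
  have hav : (a ++ [v]).IsChain E := hp.isChain.prefix ⟨b, by simp⟩
  have hvd : ([v] ++ d).IsChain E := hq.isChain.suffix ⟨c, by simp⟩
  have had := hav.append_overlap hvd (List.cons_ne_nil v [])
  rw [List.append_assoc, List.singleton_append] at had
  exact had

end Splice

section Monomial

variable {V R : Type*} [CommRing R] (w : V × V → R)

@[simp] lemma pathMonomial_singleton (a : V) : pathMonomial w [a] = 1 := by
  simp [pathMonomial]

lemma pathMonomial_cons_cons (a b : V) (l : List V) :
    pathMonomial w (a :: b :: l) = w (a, b) * pathMonomial w (b :: l) := by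
  simp [pathMonomial]

lemma pathMonomial_cons {a b : V} {q : List V} (hq : q.head? = some b) :
    pathMonomial w (a :: q) = w (a, b) * pathMonomial w q := by
  obtain ⟨q, rfl⟩ := List.head?_eq_some_iff.1 hq
  exact pathMonomial_cons_cons w a b q

lemma pathMonomial_append_cons (a : List V) (v : V) (b : List V) :
    pathMonomial w (a ++ v :: b) = pathMonomial w (a ++ [v]) * pathMonomial w (v :: b) := by
  induction a with
  | nil => simp
  | cons x a ih =>
    cases a with
    | nil => simp [pathMonomial_cons_cons]
    | cons y a => simp only [List.cons_append, pathMonomial_cons_cons] at ih ⊢; rw [ih, mul_assoc]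

lemma pathMonomial_splice_mul [DecidableEq V] {v : V} {p q : List V} (hp : v ∈ p) (hq : v ∈ q) :
    pathMonomial w (splice v p q) * pathMonomial w (splice v q p) =
      pathMonomial w p * pathMonomial w q := by
  obtain ⟨a, b, rfl, ha⟩ := List.eq_append_cons_of_mem hp
  obtain ⟨c, d, rfl, hc⟩ := List.eq_append_cons_of_mem hq
  rw [splice_append_cons ha hc, splice_append_cons hc ha, pathMonomial_append_cons w a v d,
    pathMonomial_append_cons w c v b, pathMonomial_append_cons w a v b,
    pathMonomial_append_cons w c v d]
  ring

end Monomial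

section PathMatrix

variable {V R : Type*} [LinearOrder V] [Fintype V] [CommRing R] {E : V → V → Prop}
  (hE : ∀ a b, E a b → a < b)

variable (V) in
noncomputable def increasingLists : Finset (List V) :=
  (univ : Finset (Finset V)).image fun T => T.sort (· ≤ ·)

open Classical in
/-- Only increasing paths are listed; under `hE` these are all the paths. -/
noncomputable def pathFinset (E : V → V → Prop) (i j : V) : Finset (List V) :=
  (increasingLists V).filter (IsPath E · i j)

include hE in
lemma mem_increasingLists_of_isPath {p : List V} {i j : V} (hp : IsPath E p i j) :
    p ∈ increasingLists V := by
  have hs := hp.pairwise_lt hE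
  refine mem_image.2 ⟨p.toFinset, mem_univ _, ?_⟩
  exact (List.toFinset_sort _ hs.nodup).2 (hs.imp le_of_lt)

include hE in
lemma mem_pathFinset {p : List V} {i j : V} : p ∈ pathFinset E i j ↔ IsPath E p i j := by
  classical
  rw [pathFinset, mem_filter, and_iff_right_iff_imp]
  exact mem_increasingLists_of_isPath hE

include hE in
lemma pathFinset_self (i : V) : pathFinset E i i = {[i]} := by
  ext p
  rw [mem_pathFinset hE, isPath_self_iff hE, mem_singleton]

include hE in
lemma pathFinset_eq_empty {i j : V} (hji : j < i) : pathFinset E i j = ∅ :=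
  eq_empty_of_forall_notMem fun _ hp => (((mem_pathFinset hE).1 hp).le hE).not_gt hji

noncomputable def edgeMatrix (E : V → V → Prop) [DecidableRel E] (w : V × V → R) :
    Matrix V V R :=
  of fun a b => if E a b then w (a, b) else 0

noncomputable def pathMatrix (E : V → V → Prop) (w : V × V → R) : Matrix V V R :=
  of fun i j => ∑ p ∈ pathFinset E i j, pathMonomial w p

include hE in
lemma pathMatrix_apply_self (w : V × V → R) (i : V) : pathMatrix E w i i = 1 := by
  simp [pathMatrix, pathFinset_self hE]

variable [DecidableRel E] (w : V × V → R)

include hE in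
lemma edgeMatrix_mul_pathMatrix_apply_self (i : V) :
    (edgeMatrix E w * pathMatrix E w) i i = 0 := by
  refine sum_eq_zero fun x _ => ?_
  by_cases hix : E i x
  · simp [pathMatrix, pathFinset_eq_empty hE (hE _ _ hix)]
  · simp [edgeMatrix, hix]

include hE in
/-- A path from `i ≠ j` is an edge `i → x` followed by a path from `x`. -/
lemma edgeMatrix_mul_pathMatrix_apply_of_ne {i j : V} (hij : i ≠ j) :
    (edgeMatrix E w * pathMatrix E w) i j = pathMatrix E w i j := by
  have hterm : ∀ x, edgeMatrix E w i x * pathMatrix E w x j =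
      if E i x then ∑ q ∈ pathFinset E x j, pathMonomial w (i :: q) else 0 := by
    intro x
    by_cases hix : E i x
    · simp only [edgeMatrix, pathMatrix, of_apply, if_pos hix, mul_sum]
      refine sum_congr rfl fun q hq => ?_
      rw [pathMonomial_cons w ((mem_pathFinset hE).1 hq).1]
    · simp [edgeMatrix, hix]
  rw [mul_apply, sum_congr rfl fun x _ => hterm x, ← sum_filter, sum_sigma']
  refine sum_nbij' (fun t => i :: t.2) (fun p => ⟨p.tail.head?.getD i, p.tail⟩)
    ?_ ?_ ?_ ?_ fun _ _ => rfl
  · rintro ⟨x, q⟩ ht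
    obtain ⟨hx, hq⟩ := mem_sigma.1 ht
    exact (mem_pathFinset hE).2 (((mem_pathFinset hE).1 hq).cons (mem_filter.1 hx).2)
  · intro p hp
    obtain ⟨x, q, rfl, hqx, hix, hq⟩ := ((mem_pathFinset hE).1 hp).exists_eq_cons_of_ne hij
    simp only [List.tail_cons, hqx, Option.getD_some]
    exact mem_sigma.2 ⟨mem_filter.2 ⟨mem_univ _, hix⟩, (mem_pathFinset hE).2 hq⟩
  · rintro ⟨x, q⟩ ht
    simp [((mem_pathFinset hE).1 (mem_sigma.1 ht).2).1]
  · intro p hp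
    obtain ⟨x, q, rfl, -⟩ := ((mem_pathFinset hE).1 hp).exists_eq_cons_of_ne hij
    rfl

include hE in
lemma pathMatrix_eq_one_add : pathMatrix E w = 1 + edgeMatrix E w * pathMatrix E w := by
  ext i j
  rcases eq_or_ne i j with rfl | hij
  · simp [pathMatrix_apply_self hE, edgeMatrix_mul_pathMatrix_apply_self hE]
  · simp [one_apply_ne hij, edgeMatrix_mul_pathMatrix_apply_of_ne hE w hij]

include hE in
theorem inv_one_sub_edgeMatrix : (1 - edgeMatrix E w)⁻¹ = pathMatrix E w := by
  refine inv_eq_right_inv ?_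
  rw [sub_mul, one_mul]
  exact sub_eq_of_eq_add (pathMatrix_eq_one_add hE w)

end PathMatrix

section SwapTails

variable {V ι : Type*} [DecidableEq V] {P : ι → List V} {v : V} {τ : Equiv.Perm ι}

def swapTails (P : ι → List V) (v : V) (τ : Equiv.Perm ι) (k : ι) : List V :=
  splice v (P k) (P (τ k))

lemma swapTails_apply_of_eq {k : ι} (hk : τ k = k) : swapTails P v τ k = P k := by
  rw [swapTails, hk, splice_self]

variable (hv : ∀ k, τ k ≠ k → v ∈ P k)
include hv

lemma mem_swapTails_self {k : ι} (hk : τ k ≠ k) : v ∈ swapTails P v τ k :=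
  mem_splice_self (hv _ (τ.injective.ne hk))

lemma swapTails_swapTails (hτ : Function.Involutive τ) : swapTails (swapTails P v τ) v τ = P := by
  funext k
  by_cases hk : τ k = k
  · rw [swapTails_apply_of_eq hk, swapTails_apply_of_eq hk]
  · rw [swapTails, swapTails, swapTails, hτ k]
    exact splice_splice (hv k hk) (hv _ (τ.injective.ne hk))

lemma isPath_swapTails {E : V → V → Prop} {r t : ι → V} (hP : ∀ k, IsPath E (P k) (r k) (t k))
    (k : ι) : IsPath E (swapTails P v τ k) (r k) (t (τ k)) := by
  by_cases hk : τ k = k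
  · rw [swapTails_apply_of_eq hk, hk]
    exact hP k
  · exact (hP k).splice (hP (τ k)) (hv k hk) (hv _ (τ.injective.ne hk))

lemma prod_pathMonomial_swapTails [Fintype ι] [DecidableEq ι] {R : Type*} [CommRing R]
    (w : V × V → R) (hτ : τ.IsSwap) :
    ∏ k, pathMonomial w (swapTails P v τ k) = ∏ k, pathMonomial w (P k) := by
  obtain ⟨i, j, hij, rfl⟩ := hτ
  have hj' : j ∈ univ.erase i := mem_erase.2 ⟨hij.symm, mem_univ j⟩
  have hfix : ∀ k ∈ (univ.erase i).erase j,
      pathMonomial w (swapTails P v (Equiv.swap i j) k) = pathMonomial w (P k) := by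
    intro k hk
    obtain ⟨hkj, hki, -⟩ : k ≠ j ∧ k ≠ i ∧ k ∈ univ := by simpa using hk
    rw [swapTails_apply_of_eq (Equiv.swap_apply_of_ne_of_ne hki hkj)]
  rw [← mul_prod_erase univ _ (mem_univ i), ← mul_prod_erase _ _ hj', prod_congr rfl hfix,
    ← mul_prod_erase univ (fun k => pathMonomial w (P k)) (mem_univ i),
    ← mul_prod_erase _ (fun k => pathMonomial w (P k)) hj', ← mul_assoc, ← mul_assoc]
  congr 1
  simp only [swapTails, Equiv.swap_apply_left, Equiv.swap_apply_right]
  exact pathMonomial_splice_mul w (hv i (by simpa using hij.symm)) (hv j (by simpa using hij))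

end SwapTails

section Crossing

variable {V ι : Type*} [LinearOrder V] {P : ι → List V} {v : V} {τ : Equiv.Perm ι}
  (hv : ∀ k, τ k ≠ k → v ∈ P k)

lemma mem_or_le_of_mem_splice {x : V} {p q : List V}
    (hq : q.Pairwise (· ≤ ·)) (hvq : v ∈ q) (hx : x ∈ splice v p q) : x ∈ p ∨ v ≤ x := by
  obtain ⟨c, d, rfl, hc⟩ := List.eq_append_cons_of_mem hvq
  rw [splice, dropWhile_ne_append_cons hc] at hx
  rcases List.mem_append.1 hx with hx | hx
  · exact Or.inl ((List.takeWhile_prefix _).subset hx)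
  · rcases List.mem_cons.1 hx with rfl | hx
    · exact Or.inr le_rfl
    · exact Or.inr (List.rel_of_pairwise_cons (List.pairwise_append.1 hq).2.1 hx)

include hv in
lemma mem_or_le_of_mem_swapTails (hP : ∀ k, (P k).Pairwise (· ≤ ·)) {k : ι} {x : V}
    (hx : x ∈ swapTails P v τ k) : x ∈ P k ∨ v ≤ x := by
  by_cases hk : τ k = k
  · rw [swapTails_apply_of_eq hk] at hx
    exact Or.inl hx
  · exact mem_or_le_of_mem_splice (hP _) (hv _ (τ.injective.ne hk)) hx

variable [Fintype ι]

def pathsThrough (P : ι → List V) (v : V) : Finset ι :=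
  univ.filter fun k => v ∈ P k

include hv in
lemma pathsThrough_swapTails : pathsThrough (swapTails P v τ) v = pathsThrough P v := by
  ext k
  by_cases hk : τ k = k
  · simp [pathsThrough, swapTails_apply_of_eq hk]
  · simp [pathsThrough, mem_swapTails_self hv hk, hv k hk]

variable [Fintype V] [LinearOrder ι]

def sharedVertices (P : ι → List V) : Finset V :=
  univ.filter fun v => ∃ i j, i ≠ j ∧ v ∈ P i ∧ v ∈ P j

lemma sharedVertices_eq_empty_iff :
    sharedVertices P = ∅ ↔ ∀ i j, i ≠ j → ∀ v, v ∈ P i → v ∉ P j := by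
  simp only [sharedVertices, filter_eq_empty_iff, mem_univ, true_implies, not_exists, not_and]
  exact ⟨fun h i j hij v => h i j hij, fun h v i j hij => h i j hij v⟩

include hv in
lemma mem_sharedVertices_swapTails (hτ : τ ≠ 1) : v ∈ sharedVertices (swapTails P v τ) := by
  obtain ⟨k, hk⟩ : ∃ k, τ k ≠ k := by
    by_contra! h
    exact hτ (Equiv.ext h)
  exact mem_filter.2 ⟨mem_univ _, k, τ k, hk.symm, mem_swapTails_self hv hk,
    mem_swapTails_self hv (τ.injective.ne hk)⟩

variable (h : (sharedVertices P).Nonempty)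

noncomputable def firstShared : V := (sharedVertices P).min' h

lemma one_lt_card_pathsThrough_firstShared : 1 < #(pathsThrough P (firstShared h)) := by
  obtain ⟨-, i, j, hij, hi, hj⟩ := mem_filter.1 ((sharedVertices P).min'_mem h)
  exact one_lt_card.2 ⟨i, mem_filter.2 ⟨mem_univ _, hi⟩, j, mem_filter.2 ⟨mem_univ _, hj⟩, hij⟩

noncomputable def crossingSwap : Equiv.Perm ι :=
  have hne := card_pos.1 (one_pos.trans (one_lt_card_pathsThrough_firstShared h))
  Equiv.swap ((pathsThrough P (firstShared h)).min' hne) ((pathsThrough P (firstShared h)).max' hne)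

lemma isSwap_crossingSwap : (crossingSwap h).IsSwap :=
  ⟨_, _, (min'_lt_max'_of_card _ (one_lt_card_pathsThrough_firstShared h)).ne, rfl⟩

lemma firstShared_mem_of_crossingSwap_apply_ne (k : ι) (hk : crossingSwap h k ≠ k) :
    firstShared h ∈ P k := by
  by_contra hvk
  have hT : ∀ l ∈ pathsThrough P (firstShared h), k ≠ l := fun l hl hkl =>
    hvk (hkl ▸ (mem_filter.1 hl).2)
  exact hk (Equiv.swap_apply_of_ne_of_ne (hT _ (min'_mem _ _)) (hT _ (max'_mem _ _)))

variable (hP : ∀ k, (P k).Pairwise (· ≤ ·))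
include hP

lemma firstShared_swapTails
    (h' : (sharedVertices (swapTails P (firstShared h) (crossingSwap h))).Nonempty) :
    firstShared h' = firstShared h := by
  have hv := firstShared_mem_of_crossingSwap_apply_ne h
  refine le_antisymm
    (min'_le _ _ (mem_sharedVertices_swapTails hv (isSwap_crossingSwap h).isCycle.ne_one)) ?_
  refine le_min' _ _ _ fun u hu => ?_
  obtain ⟨-, i, j, hij, hi, hj⟩ := mem_filter.1 hu
  rcases mem_or_le_of_mem_swapTails hv hP hi with hi | hle
  · rcases mem_or_le_of_mem_swapTails hv hP hj with hj | hle
    · exact min'_le _ _ (mem_filter.2 ⟨mem_univ _, i, j, hij, hi, hj⟩)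
    · exact hle
  · exact hle

lemma crossingSwap_swapTails
    (h' : (sharedVertices (swapTails P (firstShared h) (crossingSwap h))).Nonempty) :
    crossingSwap h' = crossingSwap h := by
  have hv := firstShared_mem_of_crossingSwap_apply_ne h
  have hT : pathsThrough (swapTails P (firstShared h) (crossingSwap h)) (firstShared h') =
      pathsThrough P (firstShared h) := by
    rw [firstShared_swapTails h hP h', pathsThrough_swapTails hv]
  have swap_congr : ∀ (T T' : Finset ι) (hT : T.Nonempty) (hT' : T'.Nonempty), T = T' →
      Equiv.swap (T.min' hT) (T.max' hT) = Equiv.swap (T'.min' hT') (T'.max' hT') := by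
    rintro T _ _ _ rfl
    rfl
  exact swap_congr _ _ _ _ hT

end Crossing

section Uncross

variable {V ι : Type*} [LinearOrder V] [Fintype V] [LinearOrder ι] [Fintype ι]
  {x : Equiv.Perm ι × (ι → List V)}

noncomputable def uncross (x : Equiv.Perm ι × (ι → List V)) (h : (sharedVertices x.2).Nonempty) :
    Equiv.Perm ι × (ι → List V) :=
  (x.1 * crossingSwap h, swapTails x.2 (firstShared h) (crossingSwap h))

variable (h : (sharedVertices x.2).Nonempty)

lemma sharedVertices_uncross_nonempty : (sharedVertices (uncross x h).2).Nonempty :=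
  ⟨_, mem_sharedVertices_swapTails (firstShared_mem_of_crossingSwap_apply_ne h)
    (isSwap_crossingSwap h).isCycle.ne_one⟩

lemma sign_uncross : Equiv.Perm.sign (uncross x h).1 = -Equiv.Perm.sign x.1 := by
  rw [uncross, Equiv.Perm.sign_mul, (isSwap_crossingSwap h).sign_eq, mul_neg_one]

lemma prod_pathMonomial_uncross {R : Type*} [CommRing R] (w : V × V → R) :
    ∏ k, pathMonomial w ((uncross x h).2 k) = ∏ k, pathMonomial w (x.2 k) :=
  prod_pathMonomial_swapTails (firstShared_mem_of_crossingSwap_apply_ne h) w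
    (isSwap_crossingSwap h)

lemma uncross_uncross (hP : ∀ k, (x.2 k).Pairwise (· ≤ ·))
    (h' : (sharedVertices (uncross x h).2).Nonempty) : uncross (uncross x h) h' = x := by
  have hc : crossingSwap h' = crossingSwap h := crossingSwap_swapTails h hP h'
  have hf : firstShared h' = firstShared h := firstShared_swapTails h hP h'
  obtain ⟨i, j, -, hij⟩ := isSwap_crossingSwap h
  refine Prod.ext ?_ ?_
  · change x.1 * crossingSwap h * crossingSwap h' = x.1
    rw [hc, hij, mul_assoc, Equiv.swap_mul_self, mul_one]
  · change swapTails (swapTails x.2 (firstShared h) (crossingSwap h)) (firstShared h')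
      (crossingSwap h') = x.2
    rw [hc, hf]
    exact swapTails_swapTails (firstShared_mem_of_crossingSwap_apply_ne h)
      (hij ▸ Equiv.swap_apply_self i j)

end Uncross

lemma finsum_subtype_eq_sum {α M : Type*} [AddCommMonoid M] {p : α → Prop} {s : Finset α}
    (hs : ∀ x, p x ↔ x ∈ s) (f : α → M) : ∑ᶠ x : Subtype p, f x = ∑ x ∈ s, f x := by
  rw [finsum_subtype_eq_finsum_cond, finsum_cond_eq_sum_of_cond_iff f fun _ => hs _]

section Lindstrom

variable {V ι R : Type*} [LinearOrder V] [Fintype V] [LinearOrder ι] [Fintype ι] [CommRing R]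
  {E : V → V → Prop} (hE : ∀ a b, E a b → a < b)

open Classical in
noncomputable def pathSystems (E : V → V → Prop) (r s : ι → V) :
    Finset (Equiv.Perm ι × (ι → List V)) :=
  (univ ×ˢ Fintype.piFinset fun _ => increasingLists V).filter
    fun x => ∀ k, IsPath E (x.2 k) (r k) (s (x.1 k))

include hE

lemma mem_pathSystems {r s : ι → V} {x : Equiv.Perm ι × (ι → List V)} :
    x ∈ pathSystems E r s ↔ ∀ k, IsPath E (x.2 k) (r k) (s (x.1 k)) := by
  classical
  simp only [pathSystems, mem_filter, mem_product, mem_univ, true_and, Fintype.mem_piFinset,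
    and_iff_right_iff_imp]
  exact fun hx k => mem_increasingLists_of_isPath hE (hx k)

theorem det_submatrix_pathMatrix (w : V × V → R) (r s : ι → V) :
    ((pathMatrix E w).submatrix r s).det =
      ∑ x ∈ pathSystems E r s, ((Equiv.Perm.sign x.1 : ℤ) : R) * ∏ k, pathMonomial w (x.2 k) := by
  classical
  rw [← det_transpose, det_apply']
  simp only [transpose_apply, submatrix_apply, pathMatrix, of_apply, prod_univ_sum, mul_sum]
  rw [pathSystems, sum_filter, sum_product]
  refine sum_congr rfl fun σ _ => ?_
  rw [← sum_filter]
  refine sum_congr (ext fun P => ?_) fun _ _ => rfl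
  simp only [Fintype.mem_piFinset, mem_filter, mem_pathFinset hE]
  exact ⟨fun hP => ⟨fun k => mem_increasingLists_of_isPath hE (hP k), hP⟩, And.right⟩

lemma uncross_mem_pathSystems {r s : ι → V} {x : Equiv.Perm ι × (ι → List V)}
    (hx : x ∈ pathSystems E r s) (h : (sharedVertices x.2).Nonempty) :
    uncross x h ∈ pathSystems E r s :=
  (mem_pathSystems hE).2 <| isPath_swapTails (firstShared_mem_of_crossingSwap_apply_ne h)
    ((mem_pathSystems hE).1 hx)

theorem sum_filter_sharedVertices_nonempty_eq_zero (w : V × V → R) (r s : ι → V) :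
    ∑ x ∈ (pathSystems E r s).filter (fun x => (sharedVertices x.2).Nonempty),
      ((Equiv.Perm.sign x.1 : ℤ) : R) * ∏ k, pathMonomial w (x.2 k) = 0 := by
  refine sum_involution (fun x hx => uncross x (mem_filter.1 hx).2) ?_ ?_ ?_ ?_
  · intro x hx
    rw [sign_uncross, prod_pathMonomial_uncross]
    push_cast
    ring
  · intro x _ _ hfix
    exact (isSwap_crossingSwap _).isCycle.ne_one (mul_eq_left.1 (congrArg Prod.fst hfix))
  · intro x hx
    exact mem_filter.2 ⟨uncross_mem_pathSystems hE (mem_filter.1 hx).1 _,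
      sharedVertices_uncross_nonempty _⟩
  · intro x hx
    refine uncross_uncross _ (fun k => ?_) _
    exact ((((mem_pathSystems hE).1 (mem_filter.1 hx).1) k).pairwise_lt hE).imp le_of_lt

theorem sum_pathSystems_eq_sum_filter_sharedVertices_eq_empty (w : V × V → R) (r s : ι → V) :
    ∑ x ∈ pathSystems E r s, ((Equiv.Perm.sign x.1 : ℤ) : R) * ∏ k, pathMonomial w (x.2 k) =
      ∑ x ∈ (pathSystems E r s).filter (fun x => sharedVertices x.2 = ∅),
        ((Equiv.Perm.sign x.1 : ℤ) : R) * ∏ k, pathMonomial w (x.2 k) := by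
  rw [← sum_filter_add_sum_filter_not _ (fun x => sharedVertices x.2 = ∅)]
  simp only [← nonempty_iff_ne_empty, sum_filter_sharedVertices_nonempty_eq_zero hE, add_zero]

end Lindstrom

/-- **Gessel–Viennot–Lindström lemma for DAGs.** For a DAG `G` on `[m]` with edge
indeterminates and `Λ = I - L`, and `R = {r₁ < ⋯ < r_ℓ}`, `S = {s₁ < ⋯ < s_ℓ}`,
`det (Λ⁻¹)_{R,S}` equals the signed sum, over all systems of `ℓ` pairwise
vertex-disjoint directed paths from `R` to `S`, of the products of the edge
variables of the paths, with sign the sign of the induced permutation. -/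
theorem stmt4 (m : ℕ) (E : Fin m → Fin m → Prop) [DecidableRel E]
    (hE : ∀ i j : Fin m, E i j → i < j) (R S : Finset (Fin m))
    (hRS : R.card = S.card) :
    subdet ((1 - Matrix.of (fun a b =>
        if E a b then (X (a, b) : MvPolynomial (Fin m × Fin m) ℝ) else 0))⁻¹) R S
    = ∑ᶠ PS : {x : Equiv.Perm (Fin R.card) × (Fin R.card → List (Fin m)) //
          (∀ i, IsPath E (x.2 i) ((R.orderIsoOfFin rfl) i).1
            ((S.orderIsoOfFin hRS.symm) (x.1 i)).1) ∧
          (∀ i j, i ≠ j → ∀ v, v ∈ x.2 i → v ∉ x.2 j)},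
        ((Equiv.Perm.sign PS.1.1 : ℤ) : MvPolynomial (Fin m × Fin m) ℝ)
          * ∏ i, pathMonomial (fun e => X e) (PS.1.2 i) := by
  have hΛ : (1 - Matrix.of (fun a b =>
      if E a b then (X (a, b) : MvPolynomial (Fin m × Fin m) ℝ) else 0))⁻¹ =
      pathMatrix E (fun e => X e) :=
    inv_one_sub_edgeMatrix hE _
  rw [subdet, dif_pos hRS, hΛ, det_submatrix_pathMatrix hE,
    sum_pathSystems_eq_sum_filter_sharedVertices_eq_empty hE]
  refine (finsum_subtype_eq_sum (fun x => ?_) _).symm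
  rw [mem_filter, mem_pathSystems hE, sharedVertices_eq_empty_iff]
end

section
/- (Trek separation for undirected graphs.) Let $G$ be an undirected graph on $[m]$ and let $\Sigma$ range over positive definite matrices with $(\Sigma^{-1})_{ij} = 0$ whenever $i \ne j$ and $i - j \notin E(G)$. For $A, B \subseteq [m]$ (not necessarily disjoint), $\mathrm{rank}\,\Sigma_{A,B} \le r$ for all such $\Sigma$ if and only if there exists $C \subseteq V(G)$ with $\#C \le r$ such that every path in $G$ from a vertex of $A$ to a vertex of $B$ passes through $C$. Moreover the generic rank of $\Sigma_{A,B}$ equals the minimum size of such a separating set $C$. -/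
/-!
Let `K = Σ⁻¹`. If `C` separates `A` from `B`, let `R` be the set of vertices reachable from `A`
by paths avoiding `C`. There are no edges from `R` to vertices outside `R ∪ C`, so for `b ∈ B`
the equations `(K Σ)_{R,b} = 0` express `Σ_{R,b}` through `Σ_{C,b}`; every row of `Σ_{A,B}` is
therefore a combination of the rows of `Σ_{C,B}`, and `rank Σ_{A,B} ≤ #C`.

Conversely, let `s` be the minimal size of a separator. Menger's theorem, proved by the usual
induction on the number of edges (delete an edge `xy`; if the minimum drops to `#C`, link `A`
onto `C ∪ {x}` and `C ∪ {y}` onto `B` and glue), gives `s` vertex-disjoint paths from `a_i ∈ A`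
to `b_i ∈ B`. Let `U` have a `1` at `(v, w)` when `w` follows `v` on one of these paths. It is
nilpotent, `K = (1 - U)(1 - U)ᵀ` is positive definite and supported on `G`, and
`(1 - U)⁻¹` fixes `e_{a_i}` and sends `e_{b_j}` to the indicator of the `j`-th path, so that
`(K⁻¹)_{a_i b_j} = δ_{ij}`. Finally `det(K⁻¹)_{a,b} = det K ^ (-s) · det(adj K)_{a,b}`, and the
second factor is a polynomial in the entries of `K` which does not vanish at this `K`, so the
rank is `s` off the zero set of a nonzero polynomial.
-/

open Matrix

/-- `C` separates `A` and `B` in an undirected graph: every path from a vertex of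
`A` to a vertex of `B` passes through a vertex of `C`. -/
def VSep {V : Type*} (E : V → V → Prop) (A B C : Finset V) : Prop :=
  ∀ p : List V, ∀ a ∈ A, ∀ b ∈ B, IsPath E p a b → ∃ v ∈ C, v ∈ p

/-- The concentration matrix determined by parameters `k` on the diagonal and the
edges of the undirected graph `G`. -/
noncomputable def Kof {m : ℕ} (E : Fin m → Fin m → Prop) [DecidableRel E]
    (k : Sym2 (Fin m) → ℝ) : Matrix (Fin m) (Fin m) ℝ :=
  Matrix.of (fun i j => if i = j ∨ E i j then k s(i, j) else 0)

/-- The rank of the submatrix with rows in `A` and columns in `B`. -/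
noncomputable def rkAB {m : ℕ} (M : Matrix (Fin m) (Fin m) ℝ)
    (A B : Finset (Fin m)) : ℕ :=
  (M.submatrix (fun a : {x // x ∈ A} => a.1) (fun b : {x // x ∈ B} => b.1)).rank

section Paths

variable {V : Type*} {E F : V → V → Prop} {p q : List V} {a b c d v : V}

theorem isPath_singleton (E : V → V → Prop) (a : V) : IsPath E [a] a a :=
  ⟨rfl, rfl, List.isChain_singleton a⟩

theorem IsPath.head_mem (h : IsPath E p a b) : a ∈ p :=
  List.mem_of_mem_head? h.1

theorem IsPath.last_mem (h : IsPath E p a b) : b ∈ p :=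
  List.mem_of_mem_getLast? h.2.1

theorem IsPath.mono (hEF : ∀ u v, E u v → F u v) (h : IsPath E p a b) : IsPath F p a b :=
  ⟨h.1, h.2.1, h.2.2.imp fun _ _ => hEF _ _⟩

theorem IsPath.reverse (h : IsPath (flip E) p a b) : IsPath E p.reverse b a :=
  ⟨by simpa using h.2.1, by simpa using h.1, List.isChain_reverse.2 h.2.2⟩

theorem IsPath.append (h₁ : IsPath E p a c) (hcd : E c d) (h₂ : IsPath E q d b) :
    IsPath E (p ++ q) a b := by
  refine ⟨by simp [List.head?_append, h₁.1], by simp [List.getLast?_append, h₂.2.1],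
    List.isChain_append.2 ⟨h₁.2.2, h₂.2.2, ?_⟩⟩
  simp only [h₁.2.1, h₂.1, Option.mem_def, Option.some.injEq]
  rintro _ rfl _ rfl
  exact hcd

theorem IsPath.append_tail (h₁ : IsPath E p a c) (h₂ : IsPath E q c b) :
    IsPath E (p ++ q.tail) a b := by
  match q, h₂ with
  | [c'], h₂ =>
    obtain ⟨rfl, rfl⟩ : c' = c ∧ c' = b := ⟨by simpa using h₂.1, by simpa using h₂.2.1⟩
    simpa using h₁
  | c' :: d :: t, h₂ =>
    obtain rfl : c' = c := by simpa using h₂.1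
    have hct := List.isChain_cons_cons.1 h₂.2.2
    exact h₁.append hct.1 ⟨rfl, by simpa using h₂.2.1, hct.2⟩

theorem IsPath.prefix {l₁ l₂ : List V} (h : IsPath E (l₁ ++ v :: l₂) a b) :
    IsPath E (l₁ ++ [v]) a v := by
  rw [← List.singleton_append, ← List.append_assoc] at h
  refine ⟨?_, by simp, (List.isChain_append.1 h.2.2).1⟩
  rw [← h.1]
  cases l₁ <;> rfl

theorem IsPath.exists_prefix_first_mem [DecidableEq V] (h : IsPath E p a b) (X : Finset V)
    (hX : ∃ v ∈ X, v ∈ p) :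
    ∃ q c, c ∈ X ∧ (∀ v ∈ q, v ∉ X) ∧ IsPath E (q ++ [c]) a c ∧ q ++ [c] <+: p := by
  obtain ⟨c, hc⟩ := Option.isSome_iff_exists.1
    (List.find?_isSome (p := fun v => decide (v ∈ X)) |>.2 (by simpa [and_comm] using hX))
  obtain ⟨hcX, q, r, rfl, hq⟩ := List.find?_eq_some_iff_append.1 hc
  exact ⟨q, c, by simpa using hcX, by simpa using hq, h.prefix, ⟨r, by simp⟩⟩

end Paths

section Separators

variable {V : Type*} {E : V → V → Prop} {A B C X : Finset V} {x y : V}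

theorem VSep.flip (h : VSep E A B C) : VSep (flip E) B A C := by
  intro p b hb a ha hp
  simpa using h p.reverse a ha b hb hp.reverse

noncomputable def minSepCard (E : V → V → Prop) (A B : Finset V) : ℕ :=
  sInf {n : ℕ | ∃ C : Finset V, VSep E A B C ∧ C.card = n}

theorem minSepCard_le (h : VSep E A B C) : minSepCard E A B ≤ C.card :=
  Nat.sInf_le ⟨C, h, rfl⟩

theorem exists_vSep_card_eq_minSepCard (E : V → V → Prop) (A B : Finset V) :
    ∃ C, VSep E A B C ∧ C.card = minSepCard E A B :=
  Nat.sInf_mem (s := {n | ∃ C : Finset V, VSep E A B C ∧ C.card = n})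
    ⟨A.card, A, fun _ a ha _ _ hp => ⟨a, ha, hp.head_mem⟩, rfl⟩

def deleteEdge (E : V → V → Prop) (x y : V) : V → V → Prop :=
  fun u v => E u v ∧ ¬(u = x ∧ v = y)

theorem flip_deleteEdge : flip (deleteEdge E x y) = deleteEdge (flip E) y x := by
  ext u v
  simp only [flip, deleteEdge, and_comm (a := v = x)]

theorem isChain_deleteEdge_or_mem {p : List V} (h : p.IsChain E) :
    p.IsChain (deleteEdge E x y) ∨ x ∈ p ∧ y ∈ p := by
  by_cases hp : ∀ i (hi : i + 1 < p.length), deleteEdge E x y p[i] p[i + 1]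
  · exact .inl (List.isChain_iff_getElem.2 hp)
  · obtain ⟨i, hi, hne⟩ := by simpa only [not_forall] using hp
    obtain ⟨hx, hy⟩ : p[i] = x ∧ p[i + 1] = y := by
      simpa [deleteEdge, List.isChain_iff_getElem.1 h i hi] using hne
    exact .inr ⟨hx ▸ List.getElem_mem _, hy ▸ List.getElem_mem _⟩

theorem VSep.insert_of_deleteEdge [DecidableEq V] (h : VSep (deleteEdge E x y) A B C) {z : V}
    (hz : z = x ∨ z = y) : VSep E A B (insert z C) := fun p a ha b hb hp => by
  rcases isChain_deleteEdge_or_mem hp.2.2 with hp' | ⟨hx, hy⟩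
  · obtain ⟨v, hv, hvp⟩ := h p a ha b hb ⟨hp.1, hp.2.1, hp'⟩
    exact ⟨v, Finset.mem_insert_of_mem hv, hvp⟩
  · exact ⟨z, Finset.mem_insert_self z C, by rcases hz with rfl | rfl <;> assumption⟩

theorem isChain_deleteEdge_of_not_mem {q : List V} {c : V} (h : (q ++ [c]).IsChain E)
    (hx : x ∉ q) : (q ++ [c]).IsChain (deleteEdge E x y) := by
  refine List.isChain_iff_getElem.2 fun i hi => ⟨List.isChain_iff_getElem.1 h i hi, ?_⟩
  have hiq : i < q.length := by simpa using hi
  rw [List.getElem_append_left hiq]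
  exact fun hxy => hx (hxy.1 ▸ List.getElem_mem hiq)

/-- Cutting an `A`–`B` path at its first vertex in `X` gives an `A`–`X` path that does not
use the edge `xy`, because `x ∈ X`. -/
theorem VSep.of_deleteEdge_of_mem [DecidableEq V] (hX : VSep E A B X) (hx : x ∈ X) {D : Finset V}
    (hD : VSep (deleteEdge E x y) A X D) : VSep E A B D := fun p a ha b hb hp => by
  obtain ⟨q, c, hc, hqX, hqc, hpre⟩ := hp.exists_prefix_first_mem X (hX p a ha b hb hp)
  obtain ⟨v, hv, hvq⟩ := hD _ a ha c hc
    ⟨hqc.1, hqc.2.1, isChain_deleteEdge_of_not_mem hqc.2.2 fun hxq => hqX x hxq hx⟩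
  exact ⟨v, hv, hpre.subset hvq⟩

theorem ncard_deleteEdge_lt [Finite V] (hxy : E x y) :
    {e : V × V | deleteEdge E x y e.1 e.2}.ncard < {e : V × V | E e.1 e.2}.ncard := by
  have : {e : V × V | deleteEdge E x y e.1 e.2} = {e : V × V | E e.1 e.2} \ {(x, y)} := by
    ext ⟨u, v⟩
    simp [deleteEdge, Prod.ext_iff]
  rw [this]
  exact Set.ncard_sdiff_singleton_lt_of_mem hxy

theorem ncard_flip (E : V → V → Prop) :
    {e : V × V | flip E e.1 e.2}.ncard = {e : V × V | E e.1 e.2}.ncard := by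
  rw [← Set.ncard_image_of_injective _ Prod.swap_injective]
  congr 1
  ext ⟨u, v⟩
  simp [flip]

end Separators

section Linkages

variable {V ι : Type*} {E F : V → V → Prop} {A B X : Finset V}

structure IsLinkage (E : V → V → Prop) (A B : Finset V) (P : ι → List V) : Prop where
  nodup : ∀ i, (P i).Nodup
  isPath : ∀ i, ∃ a ∈ A, ∃ b ∈ B, IsPath E (P i) a b
  disjoint : Pairwise fun i j => (P i).Disjoint (P j)

/-- The path `q c ++ [c]` runs from `A` to `c` and meets `X` only at its end `c`. -/
structure IsLinkageInto (E : V → V → Prop) (A X : Finset V) (q : X → List V) : Prop where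
  nodup : ∀ c, (q c ++ [c.1]).Nodup
  isPath : ∀ c, ∃ a ∈ A, IsPath E (q c ++ [c.1]) a c
  not_mem : ∀ c, ∀ v ∈ q c, v ∉ X
  disjoint : Pairwise fun c d => (q c ++ [c.1]).Disjoint (q d ++ [d.1])

theorem IsLinkage.mono {P : ι → List V} (hEF : ∀ u v, E u v → F u v) (hP : IsLinkage E A B P) :
    IsLinkage F A B P where
  nodup := hP.nodup
  isPath i := by
    obtain ⟨a, ha, b, hb, h⟩ := hP.isPath i
    exact ⟨a, ha, b, hb, h.mono hEF⟩
  disjoint := hP.disjoint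

theorem IsLinkage.exists_fin [Fintype ι] {P : ι → List V} (hP : IsLinkage E A B P) {k : ℕ}
    (hk : k ≤ Fintype.card ι) : ∃ Q : Fin k → List V, IsLinkage E A B Q := by
  obtain ⟨f⟩ := Function.Embedding.nonempty_of_card_le (α := Fin k) (β := ι) (by simpa using hk)
  exact ⟨P ∘ f, fun i => hP.nodup (f i), fun i => hP.isPath (f i),
    fun i j hij => hP.disjoint (f.injective.ne hij)⟩

theorem IsLinkage.exists_linkageInto [DecidableEq V] [Fintype ι] {P : ι → List V}
    (hP : IsLinkage E A X P) (hX : X.card ≤ Fintype.card ι) :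
    ∃ q : X → List V, IsLinkageInto E A X q := by
  have hcut : ∀ i, ∃ q c, c ∈ X ∧ (∀ v ∈ q, v ∉ X) ∧ (∃ a ∈ A, IsPath E (q ++ [c]) a c) ∧
      q ++ [c] <+: P i := by
    intro i
    obtain ⟨a, ha, b, hb, hab⟩ := hP.isPath i
    obtain ⟨q, c, hc, hqX, hqc, hpre⟩ := hab.exists_prefix_first_mem X ⟨b, hb, by
      obtain ⟨hne, rfl⟩ := List.mem_getLast?_eq_getLast hab.2.1
      exact List.getLast_mem hne⟩
    exact ⟨q, c, hc, hqX, ⟨a, ha, hqc⟩, hpre⟩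
  choose q c hc hqX hqc hpre using hcut
  have hinj : Function.Injective fun i => (⟨c i, hc i⟩ : X) := by
    intro i j hij
    have hcij : c i = c j := congrArg Subtype.val hij
    have hi : c i ∈ P i := (hpre i).subset (by simp)
    have hj : c i ∈ P j := (hpre j).subset (by simp [hcij])
    by_contra hne
    exact hP.disjoint hne hi hj
  have hbij := (Fintype.bijective_iff_injective_and_card _).2 ⟨hinj,
    le_antisymm (Fintype.card_le_of_injective _ hinj) (by simpa using hX)⟩
  set e := Equiv.ofBijective _ hbij
  have hce : ∀ d : X, c (e.symm d) = d := fun d => congrArg Subtype.val (e.apply_symm_apply d)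
  refine ⟨fun d => q (e.symm d), fun d => ?_, fun d => ?_, fun d => hqX _, fun d d' hdd' => ?_⟩
  · simpa only [hce] using (hpre (e.symm d)).sublist.nodup (hP.nodup _)
  · simpa only [hce] using hqc (e.symm d)
  · simp only [← hce d, ← hce d']
    exact fun v hv hv' =>
      hP.disjoint (e.symm.injective.ne hdd') ((hpre _).subset hv) ((hpre _).subset hv')

end Linkages

section Gluing

variable {V : Type*} {E F : V → V → Prop} {A B C X Y : Finset V} {x y : V}

theorem IsLinkageInto.exists_prefix {q : X → List V} (hq : IsLinkageInto E A X q) (c : X) {v : V}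
    (hv : v ∈ q c ++ [c.1]) : ∃ a ∈ A, ∃ p, IsPath E p a v ∧ ∀ w ∈ p, w = v ∨ w ∉ X := by
  obtain ⟨a, ha, hp⟩ := hq.isPath c
  rcases List.mem_append.1 hv with hv | hv
  · obtain ⟨l₁, l₂, hl⟩ := List.append_of_mem hv
    rw [hl, List.append_assoc, List.cons_append] at hp
    refine ⟨a, ha, l₁ ++ [v], hp.prefix, fun w hw => ?_⟩
    rcases List.mem_append.1 hw with hw | hw
    · exact .inr (hq.not_mem c w (hl ▸ List.mem_append_left _ hw))
    · exact .inl (List.mem_singleton.1 hw)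
  · obtain rfl := List.mem_singleton.1 hv
    refine ⟨a, ha, _, hp, fun w hw => ?_⟩
    rcases List.mem_append.1 hw with hw | hw
    · exact .inr (hq.not_mem c w hw)
    · exact .inl (List.mem_singleton.1 hw)

theorem IsLinkageInto.eq_of_mem {q : X → List V} (hq : IsLinkageInto E A X q) (c : X) {w : V}
    (hw : w ∈ q c ++ [c.1]) (hwX : w ∈ X) : w = c := by
  rcases List.mem_append.1 hw with hw | hw
  · exact absurd hwX (hq.not_mem c w hw)
  · exact List.mem_singleton.1 hw

/-- A common vertex outside `C` would give an `A`–`B` path avoiding `C`. -/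
theorem IsLinkageInto.mem_of_mem_of_mem {q : X → List V} {r : Y → List V}
    (hq : IsLinkageInto F A X q) (hr : IsLinkageInto (flip F) B Y r) (hC : VSep F A B C)
    (hCX : C ⊆ X) (hCY : C ⊆ Y) {c : X} {d : Y} {v : V} (hvq : v ∈ q c ++ [c.1])
    (hvr : v ∈ r d ++ [d.1]) : v ∈ C := by
  by_contra hv
  obtain ⟨a, ha, p₁, hp₁, hp₁X⟩ := hq.exists_prefix c hvq
  obtain ⟨b, hb, p₂, hp₂, hp₂Y⟩ := hr.exists_prefix d hvr
  obtain ⟨w, hwC, hw⟩ := hC _ a ha b hb (hp₁.append_tail hp₂.reverse)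
  rcases List.mem_append.1 hw with hw | hw
  · rcases hp₁X w hw with rfl | hwX
    · exact hv hwC
    · exact hwX (hCX hwC)
  · rcases hp₂Y w (List.mem_reverse.1 (List.mem_of_mem_tail hw)) with rfl | hwY
    · exact hv hwC
    · exact hwY (hCY hwC)

theorem eq_of_subtypeInsertEquivOption_symm_eq [DecidableEq V] (hx : x ∉ C) (hy : y ∉ C)
    {o o' : Option C} (h : ((Finset.subtypeInsertEquivOption hx).symm o : V) =
      (Finset.subtypeInsertEquivOption hy).symm o') : o = o' := by
  rcases o with _ | c <;> rcases o' with _ | c' <;>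
    simp only [Finset.subtypeInsertEquivOption, Equiv.coe_fn_symm_mk, Option.elim] at h
  · rfl
  · exact absurd (h ▸ c'.2) hx
  · exact absurd (h ▸ c.2) hy
  · rw [Subtype.ext h]

/-- The paths from `A` onto `C ∪ {x}` and the (reversed) paths from `B` onto `C ∪ {y}` are
joined at the vertices of `C` and along the edge `xy`. -/
theorem exists_linkage_of_linkageInto [DecidableEq V] (hFE : ∀ u v, F u v → E u v)
    (hxy : E x y) (hC : VSep F A B C) (hx : x ∉ C) (hy : y ∉ C) {q : ↥(insert x C) → List V}
    {r : ↥(insert y C) → List V} (hq : IsLinkageInto F A (insert x C) q)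
    (hr : IsLinkageInto (flip F) B (insert y C) r) :
    ∃ P : Option C → List V, IsLinkage E A B P := by
  let src := (Finset.subtypeInsertEquivOption hx).symm
  let tgt := (Finset.subtypeInsertEquivOption hy).symm
  let P (o : Option C) : List V :=
    q (src o) ++ [(src o).1] ++ o.elim [y] (fun _ => []) ++ (r (tgt o)).reverse
  have hmem : ∀ o, ∀ w ∈ P o, w ∈ q (src o) ++ [(src o).1] ∨ w ∈ r (tgt o) ++ [(tgt o).1] := by
    rintro (_ | c) w hw <;>
      simp [P, src, tgt, Finset.subtypeInsertEquivOption] at hw ⊢ <;> tauto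
  have hmeet : ∀ o o' w, w ∈ q (src o) ++ [(src o).1] → w ∈ r (tgt o') ++ [(tgt o').1] →
      w ∈ C ∧ w = src o ∧ w = tgt o' := by
    intro o o' w hwq hwr
    have hwC := hq.mem_of_mem_of_mem hr hC (Finset.subset_insert _ _) (Finset.subset_insert _ _)
      hwq hwr
    exact ⟨hwC, hq.eq_of_mem _ hwq (Finset.mem_insert_of_mem hwC),
      hr.eq_of_mem _ hwr (Finset.mem_insert_of_mem hwC)⟩
  refine ⟨P, fun o => ?_, fun o => ?_, fun o o' hoo' w hw hw' => ?_⟩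
  · rcases o with _ | c
    · have hP : P none =
          q (src none) ++ [(src none).1] ++ (r (tgt none) ++ [(tgt none).1]).reverse := by
        simp [P, tgt, Finset.subtypeInsertEquivOption]
      rw [hP]
      refine (hq.nodup _).append (List.nodup_reverse.2 (hr.nodup _)) fun w h1 h2 => ?_
      obtain ⟨hwC, rfl, -⟩ := hmeet none none w h1 (List.mem_reverse.1 h2)
      exact hx hwC
    · have hP : P (some c) = q (src c) ++ [(src c).1] ++ (r (tgt c)).reverse := by simp [P]
      rw [hP]
      refine (hq.nodup _).append
        (List.nodup_reverse.2 ((hr.nodup (tgt c)).sublist (List.sublist_append_left _ _)))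
        fun w h1 h2 => ?_
      have h2 := List.mem_reverse.1 h2
      exact hr.not_mem _ w h2 (Finset.mem_insert_of_mem
        (hmeet _ (some c) w h1 (List.mem_append_left _ h2)).1)
  · obtain ⟨a, ha, hpa⟩ := hq.isPath (src o)
    obtain ⟨b, hb, hpb⟩ := hr.isPath (tgt o)
    refine ⟨a, ha, b, hb, ?_⟩
    rcases o with _ | c
    · simpa [P, tgt, Finset.subtypeInsertEquivOption] using
        (hpa.mono hFE).append hxy (hpb.reverse.mono hFE)
    · simpa [P] using (hpa.mono hFE).append_tail (hpb.reverse.mono hFE)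
  · have hend' : ∀ o o', w ∈ q (src o) ++ [(src o).1] → w ∈ r (tgt o') ++ [(tgt o').1] →
        o = o' := fun o o' h1 h2 =>
      eq_of_subtypeInsertEquivOption_symm_eq hx hy
        ((hmeet o o' w h1 h2).2.1.symm.trans (hmeet o o' w h1 h2).2.2)
    rcases hmem o w hw with h1 | h1 <;> rcases hmem o' w hw' with h2 | h2
    · exact hq.disjoint (src.injective.ne hoo') h1 h2
    · exact hoo' (hend' o o' h1 h2)
    · exact hoo' (hend' o' o h2 h1).symm
    · exact hr.disjoint (tgt.injective.ne hoo') h1 h2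

end Gluing

section Menger

variable {V : Type*} [DecidableEq V]

theorem exists_linkage_of_forall_not_rel {E : V → V → Prop} (hE : ∀ u v, ¬E u v)
    (A B : Finset V) : ∃ P : Fin (minSepCard E A B) → List V, IsLinkage E A B P := by
  have hsep : VSep E A B (A ∩ B) := by
    intro p a ha b hb hp
    match p, hp with
    | [z], hp =>
      obtain ⟨rfl, rfl⟩ : z = a ∧ z = b := ⟨by simpa using hp.1, by simpa using hp.2.1⟩
      exact ⟨z, Finset.mem_inter.2 ⟨ha, hb⟩, List.mem_singleton_self z⟩
    | z :: w :: _, hp => exact absurd (List.isChain_cons_cons.1 hp.2.2).1 (hE z w)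
  have hP : IsLinkage E A B fun v : ↥(A ∩ B) => [v.1] :=
    ⟨fun _ => List.nodup_singleton _,
      fun v => ⟨v, (Finset.mem_inter.1 v.2).1, v, (Finset.mem_inter.1 v.2).2, isPath_singleton E v⟩,
      fun v w hvw u hv hw => hvw (Subtype.ext ((List.mem_singleton.1 hv).symm.trans
        (List.mem_singleton.1 hw)))⟩
  exact hP.exists_fin (by simpa using minSepCard_le hsep)

theorem exists_linkage_of_vSep_deleteEdge {E : V → V → Prop} {A B C : Finset V} {x y : V}
    (hxy : E x y) (hC : VSep (deleteEdge E x y) A B C) (hCcard : C.card < minSepCard E A B)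
    (hA : ∃ P : Fin (minSepCard (deleteEdge E x y) A (insert x C)) → List V,
      IsLinkage (deleteEdge E x y) A (insert x C) P)
    (hB : ∃ P : Fin (minSepCard (flip (deleteEdge E x y)) B (insert y C)) → List V,
      IsLinkage (flip (deleteEdge E x y)) B (insert y C) P) :
    ∃ P : Fin (minSepCard E A B) → List V, IsLinkage E A B P := by
  have hX := hC.insert_of_deleteEdge (z := x) (.inl rfl)
  have hY := hC.insert_of_deleteEdge (z := y) (.inr rfl)
  have hx : x ∉ C := fun hx =>
    (minSepCard_le hX).not_gt (by rwa [Finset.insert_eq_of_mem hx])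
  have hy : y ∉ C := fun hy =>
    (minSepCard_le hY).not_gt (by rwa [Finset.insert_eq_of_mem hy])
  have hs : minSepCard E A B = C.card + 1 :=
    le_antisymm ((minSepCard_le hX).trans (Finset.card_insert_le x C)) hCcard
  have hAX : minSepCard E A B ≤ minSepCard (deleteEdge E x y) A (insert x C) := by
    obtain ⟨D, hD, hDcard⟩ := exists_vSep_card_eq_minSepCard (deleteEdge E x y) A (insert x C)
    exact hDcard ▸ minSepCard_le (hX.of_deleteEdge_of_mem (Finset.mem_insert_self x C) hD)
  have hBY : minSepCard E A B ≤ minSepCard (flip (deleteEdge E x y)) B (insert y C) := by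
    obtain ⟨D, hD, hDcard⟩ :=
      exists_vSep_card_eq_minSepCard (flip (deleteEdge E x y)) B (insert y C)
    rw [flip_deleteEdge] at hD
    exact hDcard ▸ minSepCard_le (E := E)
      (hY.flip.of_deleteEdge_of_mem (Finset.mem_insert_self y C) hD).flip
  obtain ⟨P, hP⟩ := hA
  obtain ⟨q, hq⟩ :=
    hP.exists_linkageInto (by simpa [Finset.card_insert_of_notMem hx, ← hs] using hAX)
  obtain ⟨R, hR⟩ := hB
  obtain ⟨r, hr⟩ :=
    hR.exists_linkageInto (by simpa [Finset.card_insert_of_notMem hy, ← hs] using hBY)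
  obtain ⟨P', hP'⟩ := exists_linkage_of_linkageInto (fun u v h => h.1) hxy hC hx hy hq hr
  exact hP'.exists_fin (by simp [hs])

theorem menger [Finite V] (E : V → V → Prop) (A B : Finset V) :
    ∃ P : Fin (minSepCard E A B) → List V, IsLinkage E A B P := by
  induction hn : {e : V × V | E e.1 e.2}.ncard using Nat.strong_induction_on
    generalizing E A B with
  | _ n ih =>
  by_cases hE : ∃ x y, E x y
  · obtain ⟨x, y, hxy⟩ := hE
    have hlt := hn ▸ ncard_deleteEdge_lt hxy
    have ih₁ := fun A B => ih _ hlt (deleteEdge E x y) A B rfl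
    have ih₂ := fun A B => ih _ ((ncard_flip _).trans_lt hlt) (flip (deleteEdge E x y)) A B rfl
    by_cases hle : minSepCard E A B ≤ minSepCard (deleteEdge E x y) A B
    · obtain ⟨P, hP⟩ := ih₁ A B
      exact (hP.mono fun u v h => h.1).exists_fin (by simpa using hle)
    · obtain ⟨C, hC, hCcard⟩ := exists_vSep_card_eq_minSepCard (deleteEdge E x y) A B
      exact exists_linkage_of_vSep_deleteEdge hxy hC (by omega) (ih₁ _ _) (ih₂ _ _)
  · exact exists_linkage_of_forall_not_rel (by simpa using hE) A B

end Menger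

def Consecutive {V : Type*} (l : List V) (u v : V) : Prop :=
  ∃ n, ∃ h : n + 1 < l.length, l[n] = u ∧ l[n + 1] = v

namespace Consecutive

variable {V : Type*} {l : List V} {u v w : V}

theorem rel {R : V → V → Prop} (hl : l.IsChain R) (h : Consecutive l u v) : R u v := by
  obtain ⟨n, hn, rfl, rfl⟩ := h
  exact List.isChain_iff_getElem.1 hl n hn

theorem left_mem (h : Consecutive l u v) : u ∈ l := by
  obtain ⟨n, hn, rfl, -⟩ := h
  exact List.getElem_mem _

theorem right_mem (h : Consecutive l u v) : v ∈ l := by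
  obtain ⟨n, hn, -, rfl⟩ := h
  exact List.getElem_mem _

theorem left_unique (hl : l.Nodup) (h₁ : Consecutive l u w) (h₂ : Consecutive l v w) : u = v := by
  obtain ⟨n, hn, rfl, hw⟩ := h₁
  obtain ⟨k, hk, rfl, rfl⟩ := h₂
  obtain rfl : n = k := by simpa using hl.getElem_inj_iff.1 hw
  rfl

theorem right_unique (hl : l.Nodup) (h₁ : Consecutive l u v) (h₂ : Consecutive l u w) :
    v = w := by
  obtain ⟨n, hn, hu, rfl⟩ := h₁
  obtain ⟨k, hk, rfl, rfl⟩ := h₂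
  obtain rfl : n = k := hl.getElem_inj_iff.1 hu
  rfl

theorem idxOf_right [DecidableEq V] (hl : l.Nodup) (h : Consecutive l u v) :
    l.idxOf v = l.idxOf u + 1 := by
  obtain ⟨n, hn, rfl, rfl⟩ := h
  rw [hl.idxOf_getElem, hl.idxOf_getElem]

theorem not_head {a : V} (hl : l.Nodup) (ha : l.head? = some a) : ¬Consecutive l u a := by
  rintro ⟨n, hn, -, h⟩
  obtain ⟨h0, rfl⟩ := List.getElem?_eq_some_iff.1 (List.head?_eq_getElem? ▸ ha)
  exact n.succ_ne_zero (hl.getElem_inj_iff.1 h)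

theorem not_last {b : V} (hl : l.Nodup) (hb : l.getLast? = some b) : ¬Consecutive l b v := by
  rintro ⟨n, hn, h, -⟩
  obtain ⟨h0, rfl⟩ := List.getElem?_eq_some_iff.1 (List.getLast?_eq_getElem? ▸ hb)
  have := hl.getElem_inj_iff.1 h
  omega

theorem exists_right {b : V} (hv : v ∈ l) (hb : l.getLast? = some b) (hvb : v ≠ b) :
    ∃ w, Consecutive l v w := by
  obtain ⟨n, hn, rfl⟩ := List.getElem_of_mem hv
  obtain ⟨h0, rfl⟩ := List.getElem?_eq_some_iff.1 (List.getLast?_eq_getElem? ▸ hb)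
  by_cases hn' : n + 1 < l.length
  · exact ⟨_, n, hn', rfl, rfl⟩
  · exact absurd (by congr 1; omega) hvb

end Consecutive

theorem Matrix.isNilpotent_of_lt {n R : Type*} [Fintype n] [DecidableEq n] [Semiring R]
    (M : Matrix n n R) (φ : n → ℕ) (hM : ∀ i j, M i j ≠ 0 → φ i < φ j) : IsNilpotent M := by
  have key : ∀ k i j, (M ^ k) i j ≠ 0 → φ i + k ≤ φ j := by
    intro k
    induction k with
    | zero =>
      intro i j hij
      obtain rfl : i = j := by by_contra h; simp [h] at hij
      simp
    | succ k ih =>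
      intro i j hij
      rw [pow_succ', mul_apply] at hij
      obtain ⟨u, -, hu⟩ := Finset.exists_ne_zero_of_sum_ne_zero hij
      have h₁ := hM i u (left_ne_zero_of_mul hu)
      have h₂ := ih u j (right_ne_zero_of_mul hu)
      omega
  refine ⟨Finset.univ.sup φ + 1, ext fun i j => by_contra fun hij => ?_⟩
  have h₁ := key _ i j hij
  have h₂ := Finset.le_sup (f := φ) (Finset.mem_univ j)
  omega

section PathMatrix

variable {V ι : Type*} {p : ι → List V}

theorem Pairwise.eq_of_mem_of_mem (hdisj : Pairwise fun i j => (p i).Disjoint (p j))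
    {i j : ι} {v : V} (hi : v ∈ p i) (hj : v ∈ p j) : i = j :=
  by_contra fun hij => hdisj hij hi hj

open Classical in
noncomputable def succMatrix (p : ι → List V) : Matrix V V ℝ :=
  of fun v w => if ∃ i, Consecutive (p i) v w then 1 else 0

theorem succMatrix_ne_zero {v w : V} (h : succMatrix p v w ≠ 0) : ∃ i, Consecutive (p i) v w := by
  by_contra h'
  simp [succMatrix, h'] at h

variable [Fintype V] [DecidableEq V]

theorem Matrix.inv_apply_of_mulVec_eq_single {R : Type*} [CommRing R] {M : Matrix V V R}
    (hM : IsUnit M.det) {y : V → R} {c : V} (h : M *ᵥ y = Pi.single c 1) (u : V) :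
    M⁻¹ u c = y u := by
  have := congrArg (M⁻¹ *ᵥ ·) h
  simp only [mulVec_mulVec, nonsing_inv_mul _ hM, one_mulVec, mulVec_single_one] at this
  exact congrFun this.symm u

variable (hnodup : ∀ i, (p i).Nodup) (hdisj : Pairwise fun i j => (p i).Disjoint (p j))
include hnodup hdisj

theorem isNilpotent_succMatrix [Fintype ι] : IsNilpotent (succMatrix p) := by
  refine (succMatrix p).isNilpotent_of_lt (fun v => ∑ i, (p i).idxOf v) fun v w hvw => ?_
  obtain ⟨i, hi⟩ := succMatrix_ne_zero hvw
  refine Finset.sum_lt_sum (fun k _ => ?_) ⟨i, Finset.mem_univ i, by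
    rw [hi.idxOf_right (hnodup i)]; omega⟩
  by_cases hk : k = i
  · subst hk; rw [hi.idxOf_right (hnodup k)]; omega
  · have hv : v ∉ p k := fun hv => hk (hdisj.eq_of_mem_of_mem hv hi.left_mem)
    have hw : w ∉ p k := fun hw => hk (hdisj.eq_of_mem_of_mem hw hi.right_mem)
    rw [List.idxOf_eq_length hv, List.idxOf_eq_length hw]

theorem succMatrix_mulVec_single_head {i : ι} {a : V} (ha : (p i).head? = some a) :
    succMatrix p *ᵥ Pi.single a 1 = 0 := by
  ext v
  rw [mulVec_single_one, col_apply, Pi.zero_apply]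
  by_contra hva
  obtain ⟨j, hj⟩ := succMatrix_ne_zero hva
  obtain rfl := hdisj.eq_of_mem_of_mem hj.right_mem ((List.mem_of_mem_head? ha))
  exact Consecutive.not_head (hnodup j) ha hj

theorem one_sub_succMatrix_mulVec_indicator {j : ι} {b : V} (hb : (p j).getLast? = some b) :
    (1 - succMatrix p) *ᵥ (fun u => if u ∈ p j then 1 else 0) = Pi.single b 1 := by
  have hbj : b ∈ p j := List.mem_of_mem_getLast? hb
  ext v
  have hsucc : (succMatrix p *ᵥ fun u => if u ∈ p j then 1 else 0) v =
      if v ∈ p j ∧ v ≠ b then 1 else 0 := by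
    by_cases hv : v ∈ p j ∧ v ≠ b
    · obtain ⟨w₀, hw₀⟩ := Consecutive.exists_right hv.1 hb hv.2
      rw [if_pos hv, mulVec, dotProduct, Finset.sum_eq_single w₀]
      · simp [succMatrix, hw₀.right_mem, show ∃ i, Consecutive (p i) v w₀ from ⟨j, hw₀⟩]
      · intro w _ hw
        simp only [succMatrix, of_apply, mul_ite, mul_one, mul_zero, ite_eq_right_iff]
        rintro hwj ⟨i, hi⟩
        obtain rfl := hdisj.eq_of_mem_of_mem hi.right_mem hwj
        exact absurd (hi.right_unique (hnodup i) hw₀) hw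
      · simp
    · rw [if_neg hv]
      refine Finset.sum_eq_zero fun w _ => ?_
      simp only [succMatrix, of_apply, mul_ite, mul_one, mul_zero, ite_eq_right_iff]
      rintro hwj ⟨i, hi⟩
      obtain rfl := hdisj.eq_of_mem_of_mem hi.right_mem hwj
      refine absurd ⟨hi.left_mem, ?_⟩ hv
      rintro rfl
      exact Consecutive.not_last (hnodup i) hb hi
  rw [sub_mulVec, one_mulVec, Pi.sub_apply, hsucc, Pi.single_apply]
  by_cases hvb : v = b
  · simp [hvb, hbj]
  · by_cases hv : v ∈ p j <;> simp [hvb, hv]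

theorem exists_posDef_of_disjoint_paths [Fintype ι] [DecidableEq ι] {E : V → V → Prop}
    (hsym : ∀ u v, E u v → E v u) {a b : ι → V} (hp : ∀ i, IsPath E (p i) (a i) (b i)) :
    ∃ K : Matrix V V ℝ, K.PosDef ∧ (∀ v w, v ≠ w → ¬E v w → K v w = 0) ∧
      ∀ i j, K⁻¹ (a i) (b j) = if i = j then 1 else 0 := by
  set L := 1 - succMatrix p
  have hL : IsUnit L := (isNilpotent_succMatrix hnodup hdisj).isUnit_one_sub
  have hLdet : IsUnit L.det := (isUnit_iff_isUnit_det L).1 hL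
  have hLsupp : ∀ v u, L v u ≠ 0 → v = u ∨ ∃ i, Consecutive (p i) v u := fun v u h => by
    by_contra h'
    simp only [not_or] at h'
    simp [L, one_apply, h'.1, succMatrix, h'.2] at h
  refine ⟨L * Lᴴ, PosDef.mul_conjTranspose_self L (vecMul_injective_iff_isUnit.2 hL),
    fun v w hvw hE => ?_, fun i j => ?_⟩
  · by_contra hK
    rw [mul_apply] at hK
    obtain ⟨u, -, hu⟩ := Finset.exists_ne_zero_of_sum_ne_zero hK
    have hw := hLsupp w u (by simpa using right_ne_zero_of_mul hu)
    rcases hLsupp v u (left_ne_zero_of_mul hu) with rfl | ⟨i, hi⟩ <;> rcases hw with rfl | ⟨k, hk⟩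
    · exact hvw rfl
    · exact hE (hsym _ _ (hk.rel (hp k).2.2))
    · exact hE (hi.rel (hp i).2.2)
    · obtain rfl := hdisj.eq_of_mem_of_mem hi.right_mem hk.right_mem
      exact hvw (hi.left_unique (hnodup i) hk)
  · have ha : L *ᵥ Pi.single (a i) 1 = Pi.single (a i) 1 := by
      rw [sub_mulVec, one_mulVec, succMatrix_mulVec_single_head hnodup hdisj (hp i).1, sub_zero]
    rw [Matrix.mul_inv_rev, ← conjTranspose_nonsing_inv, mul_apply]
    simp only [conjTranspose_apply, star_trivial, inv_apply_of_mulVec_eq_single hLdet ha,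
      inv_apply_of_mulVec_eq_single hLdet
        (one_sub_succMatrix_mulVec_indicator hnodup hdisj (hp j).2.1)]
    simp only [Pi.single_apply, ite_mul, one_mul, zero_mul, Finset.sum_ite_eq', Finset.mem_univ,
      if_true]
    by_cases hij : i = j
    · simp [hij, (hp j).head_mem]
    · simpa [hij] using fun h => hij (hdisj.eq_of_mem_of_mem (hp i).head_mem h)

end PathMatrix

section RankBound

theorem Matrix.rank_le_rank_of_forall_exists_vecMul {m n l R : Type*} [Fintype n] [Fintype l]
    [CommRing R] [StrongRankCondition R] (M : Matrix m n R) (N : Matrix l n R)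
    (h : ∀ i, ∃ t, M i = t ᵥ* N) :
    M.rank ≤ N.rank := by
  choose T hT using h
  have hM : M = of T * N := by
    ext i j
    rw [hT i]
    rfl
  exact hM ▸ rank_mul_le_right _ N

variable {V : Type*} [Fintype V] [DecidableEq V]

theorem eq_mulVec_of_mulVec_eq_zero {α : Type*} [CommRing α] {K : Matrix V V α} {R C : Finset V}
    (hRC : Disjoint R C) (hK : ∀ v ∈ R, ∀ w, w ∉ R → w ∉ C → K v w = 0)
    (hKR : IsUnit (K.submatrix (fun v : R => v.1) (fun v : R => v.1)).det) {x : V → α}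
    (hx : ∀ v ∈ R, (K *ᵥ x) v = 0) :
    (fun v : R => x v) = -((K.submatrix (fun v : R => v.1) (fun v : R => v.1))⁻¹ *
      K.submatrix (fun v : R => v.1) (fun c : C => c.1)) *ᵥ fun c : C => x c := by
  set KRR := K.submatrix (fun v : R => v.1) (fun v : R => v.1)
  set KRC := K.submatrix (fun v : R => v.1) (fun c : C => c.1)
  have h : KRR *ᵥ (fun v : R => x v) + KRC *ᵥ (fun c : C => x c) = 0 := by
    ext v
    have hv := hx v v.2
    rw [mulVec, dotProduct, ← Finset.sum_subset (Finset.subset_univ (R ∪ C)),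
      Finset.sum_union hRC] at hv
    · simpa [KRR, KRC, mulVec, dotProduct, Finset.sum_attach R (fun u => K v u * x u),
        Finset.sum_attach C (fun u => K v u * x u)] using hv
    · intro u _ hu
      rw [Finset.mem_union, not_or] at hu
      rw [hK v v.2 u hu.1 hu.2, zero_mul]
  calc (fun v : R => x v) = KRR⁻¹ *ᵥ (KRR *ᵥ fun v : R => x v) := by
        rw [mulVec_mulVec, nonsing_inv_mul _ hKR, one_mulVec]
    _ = _ := by rw [eq_neg_of_add_eq_zero_left h, mulVec_neg, mulVec_mulVec, neg_mulVec]

theorem rank_submatrix_le_card_of_inv_eq_zero {S : Matrix V V ℝ} (hS : S.PosDef)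
    {A B R C : Finset V} (hRC : Disjoint R C) (hK : ∀ v ∈ R, ∀ w, w ∉ R → w ∉ C → S⁻¹ v w = 0)
    (hA : ∀ a ∈ A, a ∈ R ∨ a ∈ C) (hB : ∀ b ∈ B, b ∉ R) :
    (S.submatrix (fun a : A => a.1) (fun b : B => b.1)).rank ≤ C.card := by
  have hKR : IsUnit (S⁻¹.submatrix (fun v : R => v.1) (fun v : R => v.1)).det :=
    (isUnit_iff_isUnit_det _).1 (hS.inv.submatrix Subtype.val_injective).isUnit
  have hcol : ∀ b ∈ B, ∀ v : R, S v b = (-((S⁻¹.submatrix (fun v : R => v.1) (fun v : R => v.1))⁻¹ *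
      S⁻¹.submatrix (fun v : R => v.1) (fun c : C => c.1)) *ᵥ fun c : C => S c b) v := by
    intro b hb v
    refine congrFun (eq_mulVec_of_mulVec_eq_zero hRC hK hKR (x := fun u => S u b) fun v hv => ?_) v
    have hvb : v ≠ b := fun h => hB b hb (h ▸ hv)
    have := congrFun (congrFun (nonsing_inv_mul S ((isUnit_iff_isUnit_det S).1 hS.isUnit)) v) b
    rwa [mul_apply, one_apply_ne hvb] at this
  refine (rank_le_rank_of_forall_exists_vecMul _ (S.submatrix (fun c : C => c.1)
    (fun b : B => b.1)) fun a => ?_).trans ((rank_le_card_height _).trans (by simp))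
  rcases hA a a.2 with ha | ha
  · exact ⟨_, funext fun b => hcol b b.2 ⟨a, ha⟩⟩
  · exact ⟨Pi.single ⟨a, ha⟩ 1, by rw [single_vecMul, one_smul]; rfl⟩

theorem rank_submatrix_le_card_of_vSep {E : V → V → Prop} {S : Matrix V V ℝ} (hS : S.PosDef)
    (hSE : ∀ i j, i ≠ j → ¬E i j → S⁻¹ i j = 0) {A B C : Finset V} (hC : VSep E A B C) :
    (S.submatrix (fun a : A => a.1) (fun b : B => b.1)).rank ≤ C.card := by
  classical
  let R := {v | ∃ a ∈ A, ∃ p, IsPath E p a v ∧ ∀ u ∈ p, u ∉ C}.toFinset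
  have hR : ∀ {v}, v ∈ R ↔ ∃ a ∈ A, ∃ p, IsPath E p a v ∧ ∀ u ∈ p, u ∉ C := by simp [R]
  refine rank_submatrix_le_card_of_inv_eq_zero hS (R := R) ?_ ?_ ?_ ?_
  · refine Finset.disjoint_left.2 fun v hv hvC => ?_
    obtain ⟨a, -, p, hp, hpC⟩ := hR.1 hv
    exact hpC v hp.last_mem hvC
  · intro v hv w hwR hwC
    refine hSE v w (fun h => hwR (h ▸ hv)) fun hvw => hwR (hR.2 ?_)
    obtain ⟨a, ha, p, hp, hpC⟩ := hR.1 hv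
    refine ⟨a, ha, p ++ [w], hp.append hvw (isPath_singleton E w), fun u hu => ?_⟩
    rcases List.mem_append.1 hu with hu | hu
    · exact hpC u hu
    · exact (List.mem_singleton.1 hu) ▸ hwC
  · intro a ha
    by_cases haC : a ∈ C
    · exact .inr haC
    · exact .inl (hR.2 ⟨a, ha, [a], isPath_singleton E a, by simpa using haC⟩)
  · intro b hb hbR
    obtain ⟨a, ha, p, hp, hpC⟩ := hR.1 hbR
    obtain ⟨v, hvC, hvp⟩ := hC p a ha b hb hp
    exact hpC v hvp hvC

end RankBound

section Generic

variable {m s : ℕ}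

theorem le_rkAB_of_det_submatrix_ne_zero {M : Matrix (Fin m) (Fin m) ℝ} {A B : Finset (Fin m)}
    {a b : Fin s → Fin m} (ha : ∀ i, a i ∈ A) (hb : ∀ i, b i ∈ B) (h : (M.submatrix a b).det ≠ 0) :
    s ≤ rkAB M A B := by
  have hab : M.submatrix a b = (M.submatrix (fun a : A => a.1) (fun b : B => b.1)).submatrix
      (fun i => ⟨a i, ha i⟩) (fun i => ⟨b i, hb i⟩) := rfl
  calc s = (M.submatrix a b).rank := by
        rw [rank_of_isUnit _ ((isUnit_iff_isUnit_det _).2 (isUnit_iff_ne_zero.2 h)),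
          Fintype.card_fin]
    _ ≤ rkAB M A B := by rw [hab]; exact rank_submatrix_le _ _ _

theorem Matrix.det_submatrix_adjugate {n R : Type*} [Fintype n] [DecidableEq n] [CommRing R]
    {M : Matrix n n R} (hM : IsUnit M.det) (a b : Fin s → n) :
    (M.adjugate.submatrix a b).det = M.det ^ s * (M⁻¹.submatrix a b).det := by
  have hadj : M.adjugate = M.det • M⁻¹ := by
    rw [inv_def, smul_smul, Ring.mul_inverse_cancel _ hM, one_smul]
  rw [hadj, show (M.det • M⁻¹).submatrix a b = M.det • M⁻¹.submatrix a b from rfl, det_smul,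
    Fintype.card_fin]

noncomputable def symbolicKof (E : Fin m → Fin m → Prop) [DecidableRel E] :
    Matrix (Fin m) (Fin m) (MvPolynomial (Sym2 (Fin m)) ℝ) :=
  of fun i j => if i = j ∨ E i j then MvPolynomial.X s(i, j) else 0

theorem mapMatrix_eval_symbolicKof (E : Fin m → Fin m → Prop) [DecidableRel E]
    (k : Sym2 (Fin m) → ℝ) : (MvPolynomial.eval k).mapMatrix (symbolicKof E) = Kof E k := by
  ext i j
  simp only [RingHom.mapMatrix_apply, map_apply, symbolicKof, Kof, of_apply]
  split_ifs <;> simp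

theorem exists_mvPolynomial_ne_zero_of_det_submatrix_inv (E : Fin m → Fin m → Prop)
    [DecidableRel E] (a b : Fin s → Fin m) {K : Matrix (Fin m) (Fin m) ℝ} (hK : K.PosDef)
    (hKE : ∀ i j, i ≠ j → ¬E i j → K i j = 0) (hKab : (K⁻¹.submatrix a b).det ≠ 0) :
    ∃ g : MvPolynomial (Sym2 (Fin m)) ℝ, g ≠ 0 ∧ ∀ k, IsUnit (Kof E k).det →
      MvPolynomial.eval k g ≠ 0 → ((Kof E k)⁻¹.submatrix a b).det ≠ 0 := by
  have heval : ∀ k, MvPolynomial.eval k ((symbolicKof E).adjugate.submatrix a b).det =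
      ((Kof E k).adjugate.submatrix a b).det := fun k => by
    rw [RingHom.map_det, RingHom.mapMatrix_apply, ← submatrix_map, ← RingHom.mapMatrix_apply,
      RingHom.map_adjugate, mapMatrix_eval_symbolicKof]
  refine ⟨((symbolicKof E).adjugate.submatrix a b).det, fun hg => ?_, fun k hk hgk => ?_⟩
  · have hKsymm : ∀ i j, K i j = K j i := fun i j => by
      simpa using (congrFun (congrFun hK.isHermitian.eq i) j).symm
    have hk₀ : Kof E (Sym2.lift ⟨fun i j => K i j, hKsymm⟩) = K := by
      ext i j
      by_cases hij : i = j ∨ E i j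
      · simp [Kof, hij]
      · simp only [not_or] at hij
        simp [Kof, hij, hKE i j hij.1 hij.2]
    have := heval (Sym2.lift ⟨fun i j => K i j, hKsymm⟩)
    rw [hg, map_zero, hk₀, det_submatrix_adjugate ((isUnit_iff_isUnit_det K).1 hK.isUnit)] at this
    exact mul_ne_zero (pow_ne_zero _ hK.det_pos.ne') hKab this.symm
  · rw [heval, det_submatrix_adjugate hk] at hgk
    exact right_ne_zero_of_mul hgk

end Generic

theorem stmt12_general (m : ℕ) (E : Fin m → Fin m → Prop) [DecidableRel E]
    (hsym : ∀ i j : Fin m, E i j → E j i)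
    (A B : Finset (Fin m)) :
    (∀ r : ℕ,
      ((∀ S : Matrix (Fin m) (Fin m) ℝ, S.PosDef →
          (∀ i j : Fin m, i ≠ j → ¬ E i j → S⁻¹ i j = 0) → rkAB S A B ≤ r)
        ↔ ∃ C : Finset (Fin m), C.card ≤ r ∧ VSep E A B C))
    ∧ ∃ g : MvPolynomial (Sym2 (Fin m)) ℝ, g ≠ 0 ∧
        ∀ k : Sym2 (Fin m) → ℝ, (Kof E k).PosDef → MvPolynomial.eval k g ≠ 0 →
          rkAB (Kof E k)⁻¹ A B
            = sInf {n : ℕ | ∃ C : Finset (Fin m), VSep E A B C ∧ C.card = n} := by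
  obtain ⟨P, hP⟩ := menger E A B
  choose a ha b hb hab using hP.isPath
  obtain ⟨K, hK, hKE, hKab⟩ := exists_posDef_of_disjoint_paths hP.nodup hP.disjoint hsym hab
  have hKab' : (K⁻¹.submatrix a b).det ≠ 0 := by
    have : K⁻¹.submatrix a b = 1 := by ext i j; simp [hKab, one_apply]
    simp [this]
  obtain ⟨C, hC, hCcard⟩ := exists_vSep_card_eq_minSepCard E A B
  have hinv : ∀ {K : Matrix (Fin m) (Fin m) ℝ}, K.PosDef → K⁻¹⁻¹ = K := fun hK =>
    nonsing_inv_nonsing_inv _ ((isUnit_iff_isUnit_det _).1 hK.isUnit)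
  refine ⟨fun r => ⟨fun h => ⟨C, ?_, hC⟩, fun ⟨D, hDr, hD⟩ S hS hSE => ?_⟩, ?_⟩
  · exact hCcard.le.trans ((le_rkAB_of_det_submatrix_ne_zero ha hb hKab').trans
      (h _ hK.inv (by rwa [hinv hK])))
  · exact (rank_submatrix_le_card_of_vSep hS hSE hD).trans hDr
  · obtain ⟨g, hg, hgk⟩ := exists_mvPolynomial_ne_zero_of_det_submatrix_inv E a b hK hKE hKab'
    refine ⟨g, hg, fun k hk hgk' => le_antisymm ?_ ?_⟩
    · have hkE : ∀ i j, i ≠ j → ¬E i j → (Kof E k)⁻¹⁻¹ i j = 0 := fun i j hij hE => by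
        rw [hinv hk]
        simp [Kof, hij, hE]
      exact (rank_submatrix_le_card_of_vSep hk.inv hkE hC).trans hCcard.le
    · exact le_rkAB_of_det_submatrix_ne_zero ha hb
        (hgk k ((isUnit_iff_isUnit_det _).1 hk.isUnit) hgk')

/-- **Trek separation for undirected graphical models.** For an undirected graph `G`
on `[m]`, where `Σ` ranges over positive definite matrices with `(Σ⁻¹)_{ij} = 0`
for non-edges `i ≠ j`:  `rank Σ_{A,B} ≤ r` for all such `Σ` iff some `C` with
`#C ≤ r` separates `A` and `B`; moreover the generic rank of `Σ_{A,B}` equals the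
minimum size of a separating set. -/
theorem stmt12 (m : ℕ) (E : Fin m → Fin m → Prop) [DecidableRel E]
    (hsym : ∀ i j : Fin m, E i j → E j i) (hirr : ∀ i : Fin m, ¬ E i i)
    (A B : Finset (Fin m)) :
    (∀ r : ℕ,
      ((∀ S : Matrix (Fin m) (Fin m) ℝ, S.PosDef →
          (∀ i j : Fin m, i ≠ j → ¬ E i j → S⁻¹ i j = 0) → rkAB S A B ≤ r)
        ↔ ∃ C : Finset (Fin m), C.card ≤ r ∧ VSep E A B C))
    ∧ ∃ g : MvPolynomial (Sym2 (Fin m)) ℝ, g ≠ 0 ∧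
        ∀ k : Sym2 (Fin m) → ℝ, (Kof E k).PosDef → MvPolynomial.eval k g ≠ 0 →
          rkAB (Kof E k)⁻¹ A B
            = sInf {n : ℕ | ∃ C : Finset (Fin m), VSep E A B C ∧ C.card = n} :=
  stmt12_general m E hsym A B
end
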